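/- Every strongly connected MSP has a cone vector: there exists d ∈ ℝ^n with d ≻ 0 (all components strictly positive) such that f'(μf) d ≤ d componentwise. -/

import Mathlib

open MvPolynomial Matrix

noncomputable def mspEval {n : ℕ} (F : Fin n → MvPolynomial (Fin n) ℝ)
    (x : Fin n → ℝ) : Fin n → ℝ :=
  fun i => eval x (F i)

def mspNonneg {n : ℕ} (F : Fin n → MvPolynomial (Fin n) ℝ) : Prop :=
  ∀ i m, 0 ≤ coeff m (F i)

/-- Clean: every variable is productive. -/
noncomputable def kleeneSeq {n : ℕ} (F : Fin n → MvPolynomial (Fin n) ℝ) (k : ℕ) :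
    Fin n → ℝ :=
  (mspEval F)^[k] 0

def mspClean {n : ℕ} (F : Fin n → MvPolynomial (Fin n) ℝ) : Prop :=
  ∀ i, ∃ k, 0 < kleeneSeq F k i

noncomputable def mspJac {n : ℕ} (F : Fin n → MvPolynomial (Fin n) ℝ)
    (x : Fin n → ℝ) : Matrix (Fin n) (Fin n) ℝ :=
  Matrix.of fun i j => eval x (pderiv j (F i))

/-- X_i depends directly on X_k. -/
def mspDep {n : ℕ} (F : Fin n → MvPolynomial (Fin n) ℝ) (i k : Fin n) : Prop :=
  pderiv k (F i) ≠ 0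

/-- Strongly connected: every variable depends on every variable. -/
def mspStronglyConnected {n : ℕ} (F : Fin n → MvPolynomial (Fin n) ℝ) : Prop :=
  ∀ i k, Relation.ReflTransGen (mspDep F) i k


/-!
Since `μ` is the least fixed point and `f` is clean, `μ ≻ 0`, so strong connectivity makes the
nonnegative matrix `f'(μ)` irreducible. Perron's theorem then gives an eigenvector `z ≻ 0`,
`f'(μ) z = ρ z`; it is obtained by maximising the Collatz–Wielandt function
`x ↦ minᵢ (A B x)ᵢ / (B x)ᵢ` over the simplex, where `B = ∑_{k ≤ N} Aᵏ` is entrywise positive and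
commutes with `A`. If `ρ > 1`, then `f'(μ - εz) z ≻ z` for small `ε > 0`, and convexity of `f` on
the nonnegative orthant gives `f(μ - εz) ≤ μ - ε f'(μ - εz) z ≤ μ - εz`. But the Kleene iterates
from `0` stay below every nonnegative prefixed point and converge to a fixed point, so `μ` lies below
every nonnegative prefixed point. Hence `ρ ≤ 1`, and `d = z` is a cone vector.
-/

open Finset Filter Topology

namespace MvPolynomial

variable {σ : Type*}

lemma mem_subsemiring_of_coeff_nonneg (S : Subsemiring (MvPolynomial σ ℝ))
    (hC : ∀ c, 0 ≤ c → C c ∈ S) (hX : ∀ i, X i ∈ S) {p : MvPolynomial σ ℝ}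
    (hp : ∀ m, 0 ≤ coeff m p) : p ∈ S := by
  rw [p.as_sum]
  refine S.sum_mem fun m _ => ?_
  rw [monomial_eq]
  exact S.mul_mem (hC _ (hp m)) (S.prod_mem fun i _ => S.pow_mem (hX i) _)

lemma coeff_pderiv_nonneg {p : MvPolynomial σ ℝ} (hp : ∀ m, 0 ≤ coeff m p) (j : σ)
    (m : σ →₀ ℕ) : 0 ≤ coeff m (pderiv j p) := by
  rw [coeff_pderiv]
  exact mul_nonneg (hp _) (by positivity)

lemma eval_pos_of_coeff_nonneg {p : MvPolynomial σ ℝ} (hp : ∀ m, 0 ≤ coeff m p) (hp0 : p ≠ 0)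
    {x : σ → ℝ} (hx : ∀ j, 0 < x j) : 0 < eval x p := by
  obtain ⟨m, hm⟩ := support_nonempty.2 hp0
  rw [eval_eq]
  refine sum_pos' (fun v _ => ?_) ⟨m, hm, ?_⟩
  · exact mul_nonneg (hp v) (prod_nonneg fun j _ => pow_nonneg (hx j).le _)
  · exact mul_pos ((hp m).lt_of_ne' (mem_support_iff.1 hm)) (prod_pos fun j _ => pow_pos (hx j) _)

variable [Fintype σ]

lemma sum_eval_pderiv_mul_mul (x h : σ → ℝ) (p q : MvPolynomial σ ℝ) :
    ∑ j, eval x (pderiv j (p * q)) * h j =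
      eval x p * ∑ j, eval x (pderiv j q) * h j + eval x q * ∑ j, eval x (pderiv j p) * h j := by
  simp only [Derivation.leibniz, smul_eq_mul, map_add, map_mul, add_mul, sum_add_distrib,
    mul_sum, mul_assoc]

/-- By the Leibniz rule these conditions are stable under products, which carries the tangent
bound from the variables to all polynomials with nonnegative coefficients. -/
noncomputable def tangentBelow (x h : σ → ℝ) : Subsemiring (MvPolynomial σ ℝ) where
  carrier := {p | 0 ≤ eval x p ∧ 0 ≤ ∑ j, eval x (pderiv j p) * h j ∧
    eval x p + ∑ j, eval x (pderiv j p) * h j ≤ eval (x + h) p}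
  zero_mem' := by simp
  one_mem' := by simp
  add_mem' := by
    rintro p q ⟨hp0, hp1, hp2⟩ ⟨hq0, hq1, hq2⟩
    simp only [Set.mem_ofPred_eq, map_add, add_mul, sum_add_distrib]
    exact ⟨add_nonneg hp0 hq0, add_nonneg hp1 hq1, by linarith⟩
  mul_mem' := by
    rintro p q ⟨hp0, hp1, hp2⟩ ⟨hq0, hq1, hq2⟩
    simp only [Set.mem_ofPred_eq, map_mul, sum_eval_pderiv_mul_mul]
    refine ⟨mul_nonneg hp0 hq0, add_nonneg (mul_nonneg hp0 hq1) (mul_nonneg hq0 hp1), ?_⟩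
    calc eval x p * eval x q + (eval x p * ∑ j, eval x (pderiv j q) * h j +
          eval x q * ∑ j, eval x (pderiv j p) * h j)
        ≤ (eval x p + ∑ j, eval x (pderiv j p) * h j) *
          (eval x q + ∑ j, eval x (pderiv j q) * h j) := by nlinarith [mul_nonneg hp1 hq1]
      _ ≤ eval (x + h) p * eval (x + h) q :=
        mul_le_mul hp2 hq2 (add_nonneg hq0 hq1) ((add_nonneg hp0 hp1).trans hp2)

lemma mem_tangentBelow {x h : σ → ℝ} (hx : 0 ≤ x) (hh : 0 ≤ h) {p : MvPolynomial σ ℝ}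
    (hp : ∀ m, 0 ≤ coeff m p) : p ∈ tangentBelow x h := by
  refine mem_subsemiring_of_coeff_nonneg _ (fun c hc => ?_) (fun i => ?_) hp
  · simp [tangentBelow, hc]
  · classical
    simp [tangentBelow, pderiv_X, Pi.single_apply, apply_ite (eval x)]
    exact ⟨hx i, hh i⟩

lemma eval_nonneg_of_coeff_nonneg {p : MvPolynomial σ ℝ} (hp : ∀ m, 0 ≤ coeff m p)
    {x : σ → ℝ} (hx : 0 ≤ x) : 0 ≤ eval x p :=
  (mem_tangentBelow hx le_rfl hp).1

lemma eval_add_sum_pderiv_le {p : MvPolynomial σ ℝ} (hp : ∀ m, 0 ≤ coeff m p)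
    {x h : σ → ℝ} (hx : 0 ≤ x) (hh : 0 ≤ h) :
    eval x p + ∑ j, eval x (pderiv j p) * h j ≤ eval (x + h) p :=
  (mem_tangentBelow hx hh hp).2.2

lemma eval_mono_of_coeff_nonneg {p : MvPolynomial σ ℝ} (hp : ∀ m, 0 ≤ coeff m p)
    {x y : σ → ℝ} (hx : 0 ≤ x) (hxy : x ≤ y) : eval x p ≤ eval y p := by
  obtain ⟨-, h1, h2⟩ := mem_tangentBelow hx (sub_nonneg.2 hxy) hp
  rw [add_sub_cancel] at h2
  linarith

end MvPolynomial

namespace Matrix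

variable {ι : Type*} [Fintype ι]

lemma exists_pow_apply_pos_of_reflTransGen [DecidableEq ι] {A : Matrix ι ι ℝ}
    (hA : ∀ i j, 0 ≤ A i j) {i j : ι} (h : Relation.ReflTransGen (fun a b => 0 < A a b) i j) :
    ∃ m, 0 < (A ^ m) i j := by
  induction h with
  | refl => exact ⟨0, by simp⟩
  | @tail b c _ hbc ih =>
    obtain ⟨m, hm⟩ := ih
    refine ⟨m + 1, ?_⟩
    rw [pow_succ, mul_apply]
    exact sum_pos' (fun l _ => mul_nonneg (pow_apply_nonneg hA m i l) (hA l c))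
      ⟨b, mem_univ b, mul_pos hm hbc⟩

lemma exists_pos_commute_of_pow_apply_pos [DecidableEq ι] {A : Matrix ι ι ℝ}
    (hA : ∀ i j, 0 ≤ A i j) (hirr : ∀ i j, ∃ m, 0 < (A ^ m) i j) :
    ∃ B : Matrix ι ι ℝ, (∀ i j, 0 < B i j) ∧ Commute A B := by
  choose m hm using hirr
  set N := univ.sup fun p : ι × ι => m p.1 p.2
  refine ⟨∑ k ∈ range (N + 1), A ^ k, fun i j => ?_,
    Commute.sum_right _ _ _ fun k _ => (Commute.refl A).pow_right k⟩
  have hmN : m i j ∈ range (N + 1) :=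
    mem_range.2 (Nat.lt_succ_of_le (le_sup (f := fun p : ι × ι => m p.1 p.2) (mem_univ (i, j))))
  rw [Matrix.sum_apply]
  exact (hm i j).trans_le (single_le_sum (fun k _ => pow_apply_nonneg hA k i j) hmN)

lemma mulVec_apply_pos {B : Matrix ι ι ℝ} (hB : ∀ i j, 0 < B i j) {x : ι → ℝ} (hx : 0 ≤ x)
    (hx0 : x ≠ 0) (i : ι) : 0 < (B *ᵥ x) i := by
  obtain ⟨k, hk⟩ := Function.ne_iff.1 hx0
  exact sum_pos' (fun j _ => mul_nonneg (hB i j).le (hx j))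
    ⟨k, mem_univ k, mul_pos (hB i k) ((hx k).lt_of_ne' hk)⟩

section CollatzWielandt

variable [Nonempty ι]

noncomputable def collatzWielandt (A : Matrix ι ι ℝ) (y : ι → ℝ) : ℝ :=
  univ.inf' univ_nonempty fun i => (A *ᵥ y) i / y i

variable {A : Matrix ι ι ℝ} {y : ι → ℝ} {r : ℝ}

lemma le_collatzWielandt_iff (hy : ∀ i, 0 < y i) :
    r ≤ collatzWielandt A y ↔ ∀ i, r * y i ≤ (A *ᵥ y) i := by
  simp only [collatzWielandt, le_inf'_iff, mem_univ, true_implies, le_div_iff₀ (hy _)]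

lemma lt_collatzWielandt_iff (hy : ∀ i, 0 < y i) :
    r < collatzWielandt A y ↔ ∀ i, r * y i < (A *ᵥ y) i := by
  simp only [collatzWielandt, lt_inf'_iff, mem_univ, true_implies, lt_div_iff₀ (hy _)]

lemma collatzWielandt_smul {c : ℝ} (hc : 0 < c) :
    collatzWielandt A (c • y) = collatzWielandt A y := by
  simp only [collatzWielandt, mulVec_smul, Pi.smul_apply, smul_eq_mul,
    mul_div_mul_left _ _ hc.ne']

lemma continuousOn_collatzWielandt_mulVec (B : Matrix ι ι ℝ) {S : Set (ι → ℝ)}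
    (hS : ∀ x ∈ S, ∀ i, 0 < (B *ᵥ x) i) :
    ContinuousOn (fun x => collatzWielandt A (B *ᵥ x)) S := by
  have hcont : ∀ M : Matrix ι ι ℝ, Continuous (M *ᵥ ·) := fun M =>
    continuous_const.matrix_mulVec continuous_id
  refine ContinuousOn.finset_inf'_apply _ fun i _ =>
    ContinuousOn.div ?_ ?_ fun x hx => (hS x hx i).ne'
  · exact ((continuous_apply i).comp ((hcont A).comp (hcont B))).continuousOn
  · exact ((continuous_apply i).comp (hcont B)).continuousOn

/-- A positive matrix commuting with `A` turns a nonzero defect `A z - ρ z ≥ 0` into a strictly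
positive one. -/
lemma lt_collatzWielandt_mulVec_of_commute {B : Matrix ι ι ℝ} (hB : ∀ i j, 0 < B i j)
    (hAB : Commute A B) {z : ι → ℝ} (hz : 0 ≤ z) {ρ : ℝ} (hρ : ρ • z ≤ A *ᵥ z)
    (hne : A *ᵥ z ≠ ρ • z) : ρ < collatzWielandt A (B *ᵥ z) := by
  have hz0 : z ≠ 0 := by rintro rfl; simp at hne
  rw [lt_collatzWielandt_iff (mulVec_apply_pos hB hz hz0)]
  intro i
  have h := mulVec_apply_pos hB (sub_nonneg.2 hρ) (sub_ne_zero.2 hne) i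
  rwa [mulVec_sub, mulVec_mulVec, ← hAB.eq, ← mulVec_mulVec, mulVec_smul, Pi.sub_apply,
    Pi.smul_apply, smul_eq_mul, sub_pos] at h

end CollatzWielandt

theorem exists_pos_eigenvector_of_pow_apply_pos [DecidableEq ι] {A : Matrix ι ι ℝ}
    (hA : ∀ i j, 0 ≤ A i j) (hirr : ∀ i j, ∃ m, 0 < (A ^ m) i j) :
    ∃ (ρ : ℝ) (z : ι → ℝ), (∀ i, 0 < z i) ∧ A *ᵥ z = ρ • z := by
  cases isEmpty_or_nonempty ι
  · exact ⟨0, 0, isEmptyElim, Subsingleton.elim _ _⟩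
  obtain ⟨B, hB, hAB⟩ := exists_pos_commute_of_pow_apply_pos hA hirr
  have hBS : ∀ x ∈ stdSimplex ℝ ι, ∀ i, 0 < (B *ᵥ x) i := fun x hx =>
    mulVec_apply_pos hB hx.1 (by rintro rfl; simpa using hx.2)
  obtain ⟨x₀, hx₀, hmax⟩ := (isCompact_stdSimplex ℝ ι).exists_isMaxOn
    ⟨_, single_mem_stdSimplex ℝ (Classical.arbitrary ι)⟩
    (continuousOn_collatzWielandt_mulVec (A := A) B hBS)
  set z := B *ᵥ x₀
  have hz : ∀ i, 0 < z i := hBS x₀ hx₀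
  refine ⟨collatzWielandt A z, z, hz, ?_⟩
  by_contra hne
  have hρ : collatzWielandt A z • z ≤ A *ᵥ z := (le_collatzWielandt_iff hz).1 le_rfl
  have hlt := lt_collatzWielandt_mulVec_of_commute hB hAB (fun i => (hz i).le) hρ hne
  -- `B *ᵥ z` is, up to a positive factor, the image under `B` of the point `z / ∑ z` of the simplex
  have hsum : 0 < ∑ i, z i := sum_pos (fun i _ => hz i) univ_nonempty
  have hmem : (∑ i, z i)⁻¹ • z ∈ stdSimplex ℝ ι :=
    ⟨fun i => smul_nonneg (inv_nonneg.2 hsum.le) (hz i).le, by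
      simp only [Pi.smul_apply, smul_eq_mul, ← mul_sum, inv_mul_cancel₀ hsum.ne']⟩
  have hle : collatzWielandt A (B *ᵥ ((∑ i, z i)⁻¹ • z)) ≤ collatzWielandt A z := hmax hmem
  rw [mulVec_smul, collatzWielandt_smul (inv_pos.2 hsum)] at hle
  exact hlt.not_ge hle

end Matrix

section MSP

variable {n : ℕ} {F : Fin n → MvPolynomial (Fin n) ℝ}

lemma mspEval_nonneg (hF : mspNonneg F) {x : Fin n → ℝ} (hx : 0 ≤ x) : 0 ≤ mspEval F x :=
  fun i => eval_nonneg_of_coeff_nonneg (hF i) hx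

lemma mspEval_mono (hF : mspNonneg F) {x y : Fin n → ℝ} (hx : 0 ≤ x) (hxy : x ≤ y) :
    mspEval F x ≤ mspEval F y :=
  fun i => eval_mono_of_coeff_nonneg (hF i) hx hxy

lemma mspEval_add_mspJac_mulVec_le (hF : mspNonneg F) {x h : Fin n → ℝ} (hx : 0 ≤ x)
    (hh : 0 ≤ h) : mspEval F x + mspJac F x *ᵥ h ≤ mspEval F (x + h) :=
  fun i => eval_add_sum_pderiv_le (hF i) hx hh

lemma mspJac_nonneg (hF : mspNonneg F) {x : Fin n → ℝ} (hx : 0 ≤ x) (i j : Fin n) :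
    0 ≤ mspJac F x i j :=
  eval_nonneg_of_coeff_nonneg (coeff_pderiv_nonneg (hF i) j) hx

lemma mspJac_pos_of_mspDep (hF : mspNonneg F) {x : Fin n → ℝ} (hx : ∀ j, 0 < x j)
    {i j : Fin n} (h : mspDep F i j) : 0 < mspJac F x i j :=
  eval_pos_of_coeff_nonneg (coeff_pderiv_nonneg (hF i) j) h hx

lemma continuous_mspEval : Continuous (mspEval F) :=
  continuous_pi fun i => continuous_eval (F i)

lemma continuous_mspJac : Continuous (mspJac F) :=
  continuous_pi fun i => continuous_pi fun j => continuous_eval (pderiv j (F i))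

lemma kleeneSeq_succ (k : ℕ) : kleeneSeq F (k + 1) = mspEval F (kleeneSeq F k) :=
  Function.iterate_succ_apply' _ _ _

lemma kleeneSeq_nonneg (hF : mspNonneg F) (k : ℕ) : 0 ≤ kleeneSeq F k := by
  induction k with
  | zero => exact le_rfl
  | succ k ih => rw [kleeneSeq_succ]; exact mspEval_nonneg hF ih

lemma monotone_kleeneSeq (hF : mspNonneg F) : Monotone (kleeneSeq F) := by
  refine monotone_nat_of_le_succ fun k => ?_
  induction k with
  | zero => exact kleeneSeq_nonneg hF 1
  | succ k ih =>
    rw [kleeneSeq_succ, kleeneSeq_succ (k + 1)]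
    exact mspEval_mono hF (kleeneSeq_nonneg hF k) ih

lemma kleeneSeq_le_of_mspEval_le (hF : mspNonneg F) {b : Fin n → ℝ} (hb0 : 0 ≤ b)
    (hb : mspEval F b ≤ b) (k : ℕ) : kleeneSeq F k ≤ b := by
  induction k with
  | zero => exact hb0
  | succ k ih => rw [kleeneSeq_succ]; exact (mspEval_mono hF (kleeneSeq_nonneg hF k) ih).trans hb

lemma exists_fixedPoint_le_of_mspEval_le (hF : mspNonneg F) {b : Fin n → ℝ} (hb0 : 0 ≤ b)
    (hb : mspEval F b ≤ b) : ∃ y, 0 ≤ y ∧ mspEval F y = y ∧ y ≤ b := by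
  have hbdd : BddAbove (Set.range (kleeneSeq F)) :=
    ⟨b, Set.forall_mem_range.2 (kleeneSeq_le_of_mspEval_le hF hb0 hb)⟩
  have hlim := tendsto_atTop_ciSup (monotone_kleeneSeq hF) hbdd
  refine ⟨⨆ k, kleeneSeq F k, (kleeneSeq_nonneg hF 0).trans (le_ciSup hbdd 0), ?_,
    ciSup_le (kleeneSeq_le_of_mspEval_le hF hb0 hb)⟩
  refine tendsto_nhds_unique ((continuous_mspEval.tendsto _).comp hlim) ?_
  have hshift := hlim.comp (tendsto_add_atTop_nat 1)
  rwa [show kleeneSeq F ∘ (· + 1) = mspEval F ∘ kleeneSeq F from funext kleeneSeq_succ] at hshift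

variable {μ : Fin n → ℝ}

lemma le_of_mspEval_le (hF : mspNonneg F)
    (hleast : ∀ y : Fin n → ℝ, 0 ≤ y → mspEval F y = y → μ ≤ y) {b : Fin n → ℝ} (hb0 : 0 ≤ b)
    (hb : mspEval F b ≤ b) : μ ≤ b := by
  obtain ⟨y, hy0, hyfix, hyb⟩ := exists_fixedPoint_le_of_mspEval_le hF hb0 hb
  exact (hleast y hy0 hyfix).trans hyb

lemma pos_of_mspClean (hF : mspNonneg F) (hclean : mspClean F) (hμ0 : 0 ≤ μ)
    (hfix : mspEval F μ = μ) (i : Fin n) : 0 < μ i := by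
  obtain ⟨k, hk⟩ := hclean i
  exact hk.trans_le (kleeneSeq_le_of_mspEval_le hF hμ0 hfix.le k i)

lemma exists_mspJac_mulVec_apply_le [Nonempty (Fin n)] (hF : mspNonneg F)
    (hleast : ∀ y : Fin n → ℝ, 0 ≤ y → mspEval F y = y → μ ≤ y) (hfix : mspEval F μ = μ)
    (hμ : ∀ i, 0 < μ i) {z : Fin n → ℝ} (hz : ∀ i, 0 < z i) :
    ∃ i, (mspJac F μ *ᵥ z) i ≤ z i := by
  by_contra! hgt
  have hline : Continuous fun ε : ℝ => μ - ε • z := by fun_prop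
  have hJline : Continuous fun ε : ℝ => mspJac F (μ - ε • z) *ᵥ z :=
    (continuous_mspJac.comp hline).matrix_mulVec continuous_const
  have hev : ∀ᶠ ε in 𝓝 (0 : ℝ), ∀ i, 0 < (μ - ε • z) i ∧ z i < (mspJac F (μ - ε • z) *ᵥ z) i := by
    refine eventually_all.2 fun i => Eventually.and ?_ ?_
    · exact ((continuous_apply i).comp hline).continuousAt.eventually_const_lt (by simpa using hμ i)
    · exact ((continuous_apply i).comp hJline).continuousAt.eventually_const_lt (by simpa using hgt i)
  obtain ⟨ε, hε, hε0⟩ := ((hev.filter_mono nhdsWithin_le_nhds).and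
    (self_mem_nhdsWithin (s := Set.Ioi (0 : ℝ)))).exists
  set x := μ - ε • z
  have hx0 : 0 ≤ x := fun i => (hε i).1.le
  have htangent := mspEval_add_mspJac_mulVec_le hF hx0 (smul_nonneg hε0.le fun i => (hz i).le)
  rw [sub_add_cancel, hfix, mulVec_smul] at htangent
  have hpre : mspEval F x ≤ x := fun i => by
    have hi := htangent i
    have hJ := mul_lt_mul_of_pos_left (hε i).2 hε0
    simp only [Pi.add_apply, Pi.smul_apply, smul_eq_mul] at hi
    simp only [x, Pi.sub_apply, Pi.smul_apply, smul_eq_mul]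
    linarith
  have hμx := le_of_mspEval_le hF hleast hx0 hpre (Classical.arbitrary _)
  have hεz := mul_pos hε0 (hz (Classical.arbitrary _))
  simp only [x, Pi.sub_apply, Pi.smul_apply, smul_eq_mul] at hμx
  linarith

end MSP

/-- every strongly connected MSP has a cone vector. -/
theorem scMSP_has_cone_vector {n : ℕ} (F : Fin n → MvPolynomial (Fin n) ℝ)
    (hF : mspNonneg F) (hclean : mspClean F) (hsc : mspStronglyConnected F)
    (μ : Fin n → ℝ)
    (hμ0 : 0 ≤ μ) (hfix : mspEval F μ = μ)
    (hleast : ∀ y : Fin n → ℝ, 0 ≤ y → mspEval F y = y → μ ≤ y) :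
    ∃ d : Fin n → ℝ, (∀ j, 0 < d j) ∧ mspJac F μ *ᵥ d ≤ d := by
  have hμ := pos_of_mspClean hF hclean hμ0 hfix
  have hirr : ∀ i j, ∃ m, 0 < (mspJac F μ ^ m) i j := fun i j =>
    exists_pow_apply_pos_of_reflTransGen (mspJac_nonneg hF hμ0)
      (Relation.ReflTransGen.mono (fun _ _ => mspJac_pos_of_mspDep hF hμ) _ _ (hsc i j))
  obtain ⟨ρ, z, hz, hJz⟩ := exists_pos_eigenvector_of_pow_apply_pos (mspJac_nonneg hF hμ0) hirr
  refine ⟨z, hz, fun i => ?_⟩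
  have : Nonempty (Fin n) := ⟨i⟩
  obtain ⟨k, hk⟩ := exists_mspJac_mulVec_apply_le hF hleast hfix hμ hz
  simp only [hJz, Pi.smul_apply, smul_eq_mul] at hk ⊢
  have hρ : ρ ≤ 1 := by nlinarith [hz k]
  nlinarith [hz i]
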